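/- arXiv:1607.06936 — 2 statements merged into one kernel-verified Lean document; each statement's English description precedes it below -/
import Mathlib

section
/- If G is a claw-free graph, then the independent domination number of G equals the domination number of G, i.e., i(G) = γ(G). -/
/-- A set `S` dominates `G` if every vertex is in `S` or adjacent to a vertex of `S`. -/
def IsDomSet {V : Type*} (G : SimpleGraph V) (S : Set V) : Prop :=
  ∀ v : V, v ∈ S ∨ ∃ u ∈ S, G.Adj u v

/-- The domination number of a finite graph. -/
noncomputable def domNum {V : Type*} (G : SimpleGraph V) [Fintype V] : ℕ :=
  sInf {n | ∃ S : Finset V, IsDomSet G ↑S ∧ S.card = n}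

/-- A graph is claw-free if it has no induced `K_{1,3}`. -/
def ClawFree {V : Type*} (G : SimpleGraph V) : Prop :=
  IsEmpty (completeBipartiteGraph (Fin 1) (Fin 3) ↪g G)

/-- The independent domination number of a finite graph. -/
noncomputable def indepDomNum {V : Type*} (G : SimpleGraph V) [Fintype V] : ℕ :=
  sInf {n | ∃ S : Finset V, IsDomSet G ↑S ∧
    (∀ u ∈ S, ∀ w ∈ S, u ≠ w → ¬ G.Adj u w) ∧ S.card = n}

/-! Given a dominating set `D`, take a maximal independent subset `I ⊆ D` and a maximal
independent set `J` among the vertices not dominated by `I`; then `I ∪ J` is an independent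
dominating set. Every vertex of `J` is dominated by a vertex of `D \ I`, and claw-freeness makes
this assignment injective: a vertex of `D \ I` dominating two vertices of `J` would, together with
its neighbour in `I`, be the centre of a claw. Hence `|I ∪ J| ≤ |D|`. The reverse inequality
`γ(G) ≤ i(G)` holds in every graph. -/

open Finset

section

variable {V : Type*} {G : SimpleGraph V}

variable (G) in
theorem exists_isIndepSet_subset_forall_adj (A : Finset V) :
    ∃ I : Finset V, I ⊆ A ∧ G.IsIndepSet I ∧ ∀ a ∈ A, a ∉ I → ∃ i ∈ I, G.Adj i a := by
  classical
  obtain ⟨I, hI⟩ := (A.powerset.filter fun I : Finset V => G.IsIndepSet (I : Set V)).exists_maximal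
    ⟨∅, by simp⟩
  simp only [mem_filter, mem_powerset] at hI
  refine ⟨I, hI.1.1, hI.1.2, fun a ha haI => ?_⟩
  by_contra! h
  have hins : G.IsIndepSet (insert a I : Finset V) := by
    rw [coe_insert, SimpleGraph.IsIndepSet, Set.pairwise_insert]
    exact ⟨hI.1.2, fun b hb _ => ⟨fun hab => h b hb hab.symm, h b hb⟩⟩
  exact haI (hI.2 ⟨insert_subset ha hI.1.1, hins⟩ (subset_insert a I) (mem_insert_self a I))

namespace ClawFree

theorem adj_or_adj_of_adj (hG : ClawFree G) {c u w i : V} (hcu : G.Adj c u) (hcw : G.Adj c w)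
    (hci : G.Adj c i) (huw : u ≠ w) (hnuw : ¬G.Adj u w) (hui : u ≠ i) (hwi : w ≠ i) :
    G.Adj u i ∨ G.Adj w i := by
  by_contra! h
  obtain ⟨hnui, hnwi⟩ := h
  let f : Fin 1 ⊕ Fin 3 → V := Sum.elim (fun _ => c) ![u, w, i]
  have hf : f.Injective := by
    rintro (a | a) (b | b) hab <;> fin_cases a <;> fin_cases b <;>
      simp_all [f, hcu.ne, hcw.ne, hci.ne]
  have hadj : ∀ a b, G.Adj (f a) (f b) ↔ (completeBipartiteGraph (Fin 1) (Fin 3)).Adj a b := by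
    rintro (a | a) (b | b) <;> fin_cases a <;> fin_cases b <;>
      simp [f, hcu, hcw, hci, hcu.symm, hcw.symm, hci.symm, hnuw, hnui, hnwi,
        mt G.adj_symm hnuw, mt G.adj_symm hnui, mt G.adj_symm hnwi]
  exact hG.false ⟨⟨f, hf⟩, hadj _ _⟩

theorem card_le_card_sdiff_of_isDomSet [DecidableEq V] (hG : ClawFree G) {D I J : Finset V}
    (hD : IsDomSet G D) (hI : ∀ d ∈ D, d ∉ I → ∃ i ∈ I, G.Adj i d) (hJ : G.IsIndepSet J)
    (hJI : ∀ u ∈ J, u ∉ I ∧ ∀ i ∈ I, ¬G.Adj i u) :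
    #J ≤ #(D \ I) := by
  refine card_le_card_of_forall_subsingleton (fun u d => d = u ∨ G.Adj d u) (fun u hu => ?_) ?_
  · rcases hD u with hu' | ⟨d, hd, hdu⟩
    · exact ⟨u, mem_sdiff.2 ⟨hu', (hJI u hu).1⟩, Or.inl rfl⟩
    · exact ⟨d, mem_sdiff.2 ⟨hd, fun hdI => (hJI u hu).2 d hdI hdu⟩, Or.inr hdu⟩
  rintro d hd u ⟨hu, hdu⟩ w ⟨hw, hdw⟩
  by_contra huw
  obtain ⟨hdD, hdI⟩ := mem_sdiff.1 hd
  obtain ⟨i, hi, hid⟩ := hI d hdD hdI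
  rcases hdu with rfl | hdu <;> rcases hdw with rfl | hdw
  · exact huw rfl
  · exact hJ hu hw huw hdw
  · exact hJ hu hw huw hdu.symm
  · have hui : u ≠ i := fun h => (hJI u hu).1 (h ▸ hi)
    have hwi : w ≠ i := fun h => (hJI w hw).1 (h ▸ hi)
    rcases hG.adj_or_adj_of_adj hdu hdw hid.symm huw (hJ hu hw huw) hui hwi with h | h
    · exact (hJI u hu).2 i hi h.symm
    · exact (hJI w hw).2 i hi h.symm

end ClawFree

theorem ClawFree.exists_isIndepSet_isDomSet_card_le [Fintype V] (hG : ClawFree G)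
    {D : Finset V} (hD : IsDomSet G D) :
    ∃ S : Finset V, IsDomSet G S ∧ G.IsIndepSet S ∧ #S ≤ #D := by
  classical
  obtain ⟨I, hID, hI, hIdom⟩ := exists_isIndepSet_subset_forall_adj G D
  obtain ⟨J, hJU, hJ, hJdom⟩ :=
    exists_isIndepSet_subset_forall_adj G {v | v ∉ I ∧ ∀ i ∈ I, ¬G.Adj i v}
  have hJI : ∀ u ∈ J, u ∉ I ∧ ∀ i ∈ I, ¬G.Adj i u := fun u hu => (mem_filter.1 (hJU hu)).2
  refine ⟨I ∪ J, fun v => ?_, ?_, ?_⟩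
  · simp only [coe_union, Set.mem_union, mem_coe]
    by_cases hvI : v ∈ I
    · exact Or.inl (Or.inl hvI)
    by_cases hv : ∃ i ∈ I, G.Adj i v
    · obtain ⟨i, hi, hiv⟩ := hv
      exact Or.inr ⟨i, Or.inl hi, hiv⟩
    by_cases hvJ : v ∈ J
    · exact Or.inl (Or.inr hvJ)
    push Not at hv
    obtain ⟨j, hj, hjv⟩ := hJdom v (mem_filter.2 ⟨mem_univ v, hvI, hv⟩) hvJ
    exact Or.inr ⟨j, Or.inr hj, hjv⟩
  · rw [coe_union, SimpleGraph.IsIndepSet, Set.pairwise_union]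
    exact ⟨hI, hJ, fun i hi u hu _ => ⟨(hJI u hu).2 i hi, fun h => (hJI u hu).2 i hi h.symm⟩⟩
  · calc #(I ∪ J) ≤ #I + #J := card_union_le I J
      _ ≤ #I + #(D \ I) :=
        Nat.add_le_add_left (hG.card_le_card_sdiff_of_isDomSet hD hIdom hJ hJI) _
      _ = #D := by rw [add_comm, card_sdiff_add_card_eq_card hID]

section Fintype

variable [Fintype V]

theorem domNum_le_card {S : Finset V} (hS : IsDomSet G S) : domNum G ≤ #S :=
  Nat.sInf_le ⟨S, hS, rfl⟩

theorem indepDomNum_le_card {S : Finset V} (hS : IsDomSet G S) (hS' : G.IsIndepSet S) :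
    indepDomNum G ≤ #S :=
  Nat.sInf_le ⟨S, hS, hS', rfl⟩

variable (G) in
theorem exists_isDomSet_card_eq_domNum : ∃ D : Finset V, IsDomSet G D ∧ #D = domNum G :=
  Nat.sInf_mem (s := {n | ∃ S : Finset V, IsDomSet G S ∧ #S = n})
    ⟨_, univ, fun v => Or.inl (mem_univ v), rfl⟩

variable (G) in
theorem exists_isIndepSet_isDomSet_card_eq_indepDomNum :
    ∃ S : Finset V, IsDomSet G S ∧ G.IsIndepSet S ∧ #S = indepDomNum G := by
  obtain ⟨I, -, hI, hIdom⟩ := exists_isIndepSet_subset_forall_adj G univ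
  obtain ⟨S, hSdom, hS, hScard⟩ := Nat.sInf_mem (s := {n | ∃ S : Finset V, IsDomSet G S ∧
      (∀ u ∈ S, ∀ w ∈ S, u ≠ w → ¬ G.Adj u w) ∧ #S = n})
    ⟨_, I, fun v => (em (v ∈ I)).imp_right (hIdom v (mem_univ v)), hI, rfl⟩
  exact ⟨S, hSdom, hS, hScard⟩

variable (G) in
theorem domNum_le_indepDomNum : domNum G ≤ indepDomNum G := by
  obtain ⟨S, hSdom, -, hS⟩ := exists_isIndepSet_isDomSet_card_eq_indepDomNum G
  exact hS ▸ domNum_le_card hSdom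

theorem ClawFree.indepDomNum_le_domNum (hG : ClawFree G) : indepDomNum G ≤ domNum G := by
  obtain ⟨D, hD, hDcard⟩ := exists_isDomSet_card_eq_domNum G
  obtain ⟨S, hSdom, hS, hSD⟩ := hG.exists_isIndepSet_isDomSet_card_le hD
  exact hDcard ▸ (indepDomNum_le_card hSdom hS).trans hSD

end Fintype

end

theorem stmt_0 {V : Type*} [Fintype V] (G : SimpleGraph V) (hG : ClawFree G) :
    indepDomNum G = domNum G :=
  hG.indepDomNum_le_domNum.antisymm (domNum_le_indepDomNum G)
end

section
/- Let G be a claw-free graph with independent dominating set Γ = {v_1,…,v_k}. If j_1, j_2, j_3, j_4 are distinct indices in [k], x is a common neighbor of v_{j_1} and v_{j_2} with N(x) ∩ Γ = {v_{j_1}, v_{j_2}}, and y is a common neighbor of v_{j_3} and v_{j_4} with N(y) ∩ Γ = {v_{j_3}, v_{j_4}}, then x and y are not adjacent. -/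
theorem ClawFree.adj_or_adj_or_adj {V : Type*} {G : SimpleGraph V} (hG : ClawFree G)
    {x a b c : V} (hab : a ≠ b) (hac : a ≠ c) (hbc : b ≠ c)
    (hxa : G.Adj x a) (hxb : G.Adj x b) (hxc : G.Adj x c) :
    G.Adj a b ∨ G.Adj a c ∨ G.Adj b c := by
  by_contra! hindep
  obtain ⟨hab', hac', hbc'⟩ := hindep
  let f : Fin 1 ⊕ Fin 3 → V := Sum.elim (fun _ => x) ![a, b, c]
  have hf : Function.Injective f := by
    rintro (i | i) (j | j) h <;> fin_cases i <;> fin_cases j <;>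
      simp_all [f, hxa.ne, hxb.ne, hxc.ne, hxa.ne.symm, hxb.ne.symm, hxc.ne.symm]
  refine hG.false ⟨⟨f, hf⟩, fun {i j} => ?_⟩
  change G.Adj (f i) (f j) ↔ _
  rcases i with i | i <;> rcases j with j | j <;> fin_cases i <;> fin_cases j <;>
    simp_all [f, G.adj_comm]

theorem stmt_2_general {V : Type*} (G : SimpleGraph V) (hG : ClawFree G)
    (k : ℕ) (v : Fin k → V) (hinj : Function.Injective v)
    (hind : ∀ i j : Fin k, i ≠ j → ¬ G.Adj (v i) (v j))
    (j1 j2 j3 j4 : Fin k)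
    (hd : j1 ≠ j2 ∧ j1 ≠ j3 ∧ j1 ≠ j4 ∧ j2 ≠ j3 ∧ j2 ≠ j4 ∧ j3 ≠ j4)
    (x y : V) (hy : y ∉ Set.range v)
    (hxN : {u | u ∈ Set.range v ∧ G.Adj x u} = {v j1, v j2})
    (hyN : {u | u ∈ Set.range v ∧ G.Adj y u} = {v j3, v j4}) :
    ¬ G.Adj x y := by
  obtain ⟨h12, h13, h14, h23, h24, -⟩ := hd
  have hx1 : G.Adj x (v j1) := ((Set.ext_iff.mp hxN (v j1)).mpr (by simp)).2
  have hx2 : G.Adj x (v j2) := ((Set.ext_iff.mp hxN (v j2)).mpr (by simp)).2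
  have hy_dominators : ∀ i, G.Adj y (v i) → i = j3 ∨ i = j4 := fun i h => by
    simpa [hinj.eq_iff] using (Set.ext_iff.mp hyN (v i)).mp ⟨⟨i, rfl⟩, h⟩
  have hy1 : ¬ G.Adj (v j1) y := fun h => (hy_dominators j1 h.symm).elim h13 h14
  have hy2 : ¬ G.Adj (v j2) y := fun h => (hy_dominators j2 h.symm).elim h23 h24
  intro hxy
  rcases hG.adj_or_adj_or_adj (hinj.ne h12) (fun h => hy ⟨j1, h⟩) (fun h => hy ⟨j2, h⟩)
    hx1 hx2 hxy with h | h | h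
  exacts [hind j1 j2 h12 h, hy1 h, hy2 h]

theorem stmt_2 {V : Type*} [Fintype V] (G : SimpleGraph V) (hG : ClawFree G)
    (k : ℕ) (v : Fin k → V) (hinj : Function.Injective v)
    (hdom : IsDomSet G (Set.range v))
    (hind : ∀ i j : Fin k, i ≠ j → ¬ G.Adj (v i) (v j))
    (j1 j2 j3 j4 : Fin k)
    (hd : j1 ≠ j2 ∧ j1 ≠ j3 ∧ j1 ≠ j4 ∧ j2 ≠ j3 ∧ j2 ≠ j4 ∧ j3 ≠ j4)
    (x y : V) (hx : x ∉ Set.range v) (hy : y ∉ Set.range v)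
    (hxN : {u | u ∈ Set.range v ∧ G.Adj x u} = {v j1, v j2})
    (hyN : {u | u ∈ Set.range v ∧ G.Adj y u} = {v j3, v j4}) :
    ¬ G.Adj x y :=
  stmt_2_general G hG k v hinj hind j1 j2 j3 j4 hd x y hy hxN hyN
end
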